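/- arXiv:1007.2534 — 4 statements merged into one kernel-verified Lean document; each statement's English description precedes it below -/
import Mathlib

section
/- Suppose there exist θ ∈ (0,1) and α ∈ [0,1) such that for every literal p either v_p > θ ≥ θ − α > v_{¬p} or v_{¬p} > θ ≥ θ − α > v_p, and the truth assignment u defined by u_p = 1 in the first case and u_p = 0 in the second case is consistent with the doctrine. Then for every literal p with u_p = 1 one has v*_p − v*_{¬p} > α, i.e. the decision of margin α associated with the upper revised valuation v* agrees with u. -/
open Finset

structure Doctrine (L : Type) [DecidableEq L] (neg : L → L) where
  clauses : Finset (Finset L)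
  two_le : ∀ C ∈ clauses, 2 ≤ C.card
  tnd : ∀ p : L, ({p, neg p} : Finset L) ∈ clauses

noncomputable def clauseMin {L : Type} [DecidableEq L] (neg : L → L) (v : L → ℝ) (p : L)
    (C : Finset L) : ℝ :=
  if h : (C.erase p).Nonempty then (C.erase p).inf' h (fun q => v (neg q)) else 0

noncomputable def step {L : Type} [DecidableEq L] (neg : L → L) (D : Doctrine L neg)
    (v : L → ℝ) : L → ℝ := fun p =>
  (D.clauses.filter (fun C => p ∈ C)).sup'
    ⟨{p, neg p}, Finset.mem_filter.mpr ⟨D.tnd p, by simp⟩⟩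
    (clauseMin neg v p)


/-!
The literals made true by `u` are separated from their negations with margin `α` around the
threshold `θ`, and this separation survives one step of the revision. A true literal `p` does
not lose value, because the tertium-non-datur clause `{p, ¬p}` offers it `v_{¬¬p} = v_p`. A
false literal `¬p` cannot gain value above `θ - α`, because by consistency every clause through
it also contains a true literal `q ≠ ¬p`, whose negation has value below `θ - α`. Iterating, the
separation holds for `v*`.
-/

variable {L : Type} [DecidableEq L] {neg : L → L}

theorem Doctrine.neg_ne (D : Doctrine L neg) (p : L) : neg p ≠ p := by
  intro h
  have := D.two_le _ (D.tnd p)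
  simp [h] at this

theorem clauseMin_tnd (D : Doctrine L neg) (w : L → ℝ) (p : L) :
    clauseMin neg w p {p, neg p} = w (neg (neg p)) := by
  have herase : ({p, neg p} : Finset L).erase p = {neg p} :=
    erase_insert (notMem_singleton.mpr (D.neg_ne p).symm)
  simp [clauseMin, herase]

theorem clauseMin_le_step {D : Doctrine L neg} {C : Finset L} (hC : C ∈ D.clauses)
    (w : L → ℝ) {p : L} (hp : p ∈ C) : clauseMin neg w p C ≤ step neg D w p :=
  le_sup' (clauseMin neg w p) (mem_filter.mpr ⟨hC, hp⟩)

theorem le_step (hneg : ∀ p, neg (neg p) = p) (D : Doctrine L neg) (w : L → ℝ) (p : L) :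
    w p ≤ step neg D w p := by
  have := clauseMin_le_step (D.tnd p) w (mem_insert_self p {neg p})
  rwa [clauseMin_tnd D, hneg] at this

theorem step_lt {D : Doctrine L neg} {w : L → ℝ} {p : L} {b : ℝ}
    (h : ∀ C ∈ D.clauses, p ∈ C → ∃ q ∈ C, q ≠ p ∧ w (neg q) < b) : step neg D w p < b := by
  refine (sup'_lt_iff _).mpr fun C hC => ?_
  obtain ⟨hCD, hpC⟩ := mem_filter.mp hC
  obtain ⟨q, hqC, hqp, hq⟩ := h C hCD hpC
  have hqe : q ∈ C.erase p := mem_erase.mpr ⟨hqp, hqC⟩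
  rw [clauseMin, dif_pos ⟨q, hqe⟩]
  exact (inf'_le _ hqe).trans_lt hq

def Separates (neg : L → L) (T : Set L) (a b : ℝ) (w : L → ℝ) : Prop :=
  ∀ p ∈ T, a < w p ∧ w (neg p) < b

section Consistent

variable (hneg : ∀ p, neg (neg p) = p) (D : Doctrine L neg) {T : Set L}
  (hT : ∀ p ∈ T, neg p ∉ T) (hcons : ∀ C ∈ D.clauses, ∃ q ∈ C, q ∈ T) {a b : ℝ}
include hneg hT hcons

theorem Separates.map_step {w : L → ℝ} (hw : Separates neg T a b w) :
    Separates neg T a b (step neg D w) := by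
  refine fun p hp => ⟨(hw p hp).1.trans_le (le_step hneg D w p), step_lt fun C hC _ => ?_⟩
  obtain ⟨q, hqC, hq⟩ := hcons C hC
  exact ⟨q, hqC, fun hqp => hT p hp (hqp ▸ hq), (hw q hq).2⟩

theorem Separates.iterate_step {w : L → ℝ} (hw : Separates neg T a b w) (n : ℕ) :
    Separates neg T a b ((step neg D)^[n] w) :=
  Function.Iterate.rec _ hw (fun _ => Separates.map_step hneg D hT hcons) n

end Consistent

theorem respect_consistent_majority_general {L : Type} [DecidableEq L]
    (neg : L → L) (hneg : ∀ p, neg (neg p) = p) (D : Doctrine L neg) (v vs : L → ℝ)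
    (hvs : ∃ n : ℕ, vs = (step neg D)^[n] v)
    (θ α : ℝ)
    (hsplit : ∀ p, (v p > θ ∧ θ - α > v (neg p)) ∨ (v (neg p) > θ ∧ θ - α > v p))
    (u : L → ℝ)
    (hu0 : ∀ p, v (neg p) > θ ∧ θ - α > v p → u p = 0)
    (hcons : ∀ C ∈ D.clauses, ∃ q ∈ C, u q = 1) :
    ∀ p, u p = 1 → vs p - vs (neg p) > α := by
  obtain ⟨n, rfl⟩ := hvs
  have hsep : Separates neg {p | u p = 1} θ (θ - α) v := fun p hp => by
    rcases hsplit p with ⟨h1, h2⟩ | h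
    · exact ⟨h1, h2⟩
    · exact absurd ((hp : u p = 1).symm.trans (hu0 p h)) one_ne_zero
  have hT : ∀ p, u p = 1 → u (neg p) ≠ 1 := fun p hp => by
    obtain ⟨h1, h2⟩ := hsep p hp
    rw [hu0 (neg p) ⟨by rwa [hneg], h2⟩]
    norm_num
  intro p hp
  obtain ⟨h1, h2⟩ := hsep.iterate_step hneg D hT hcons n p hp
  linarith

theorem respect_consistent_majority {L : Type} [Fintype L] [DecidableEq L]
    (neg : L → L) (hneg : ∀ p, neg (neg p) = p) (D : Doctrine L neg) (v vs : L → ℝ)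
    (hv : ∀ p, 0 ≤ v p ∧ v p ≤ 1)
    (hvs : ∃ n : ℕ, vs = (step neg D)^[n] v) (hfix : step neg D vs = vs)
    (θ α : ℝ) (hθ : 0 < θ ∧ θ < 1) (hα : 0 ≤ α ∧ α < 1)
    (hsplit : ∀ p, (v p > θ ∧ θ - α > v (neg p)) ∨ (v (neg p) > θ ∧ θ - α > v p))
    (u : L → ℝ)
    (hu1 : ∀ p, v p > θ ∧ θ - α > v (neg p) → u p = 1)
    (hu0 : ∀ p, v (neg p) > θ ∧ θ - α > v p → u p = 0)
    (hcons : ∀ C ∈ D.clauses, ∃ q ∈ C, u q = 1) :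
    ∀ p, u p = 1 → vs p - vs (neg p) > α :=
  respect_consistent_majority_general neg hneg D v vs hvs θ α hsplit u hu0 hcons
end

section
/- (Monotonicity) If the valuation v is modified into ṽ with ṽ_p > v_p and ṽ_q = v_q for all q ≠ p, then the acceptability of p does not decrease: there exists ε > 0 such that for ṽ_p ∈ (v_p, v_p + ε], either ṽ*_p − ṽ*_{¬p} > v*_p − v*_{¬p} or ṽ*_p − ṽ*_{¬p} = v*_p − v*_{¬p}. -/
/-!
The operator `step` is inflationary and monotone, and it commutes with adding a constant, so
`w ≤ w' + c` implies `step w ≤ step w' + c`. Raising `v p` to `x` raises `v` by at most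
`x - v p` everywhere, hence `v* ≤ ṽ* ≤ v* + (x - v p)`. If `x ≤ v*_p`, the update stays below
`v*`, so `ṽ* = v*`. Otherwise `v*_p`, which is a value of `v` in `[v p, x)`, equals `v p` once
`ε` is below the gap between `v p` and the next larger value of `v`; then
`ṽ*_p ≥ x = v*_p + (x - v p) ≥ v*_p + ṽ*_{¬p} - v*_{¬p}`.
-/

open Finset

theorem Function.iterate_eq_of_iterate_fixed {α : Type*} {f : α → α} {a b : α} {n m : ℕ}
    (hb : b = f^[n] a) (hfix : f b = b) (hnm : n ≤ m) : f^[m] a = b := by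
  obtain ⟨k, rfl⟩ := Nat.exists_eq_add_of_le hnm
  rw [Nat.add_comm, Function.iterate_add_apply, ← hb, Function.iterate_fixed hfix]

namespace Doctrine

variable {L : Type} [DecidableEq L] {neg : L → L} (D : Doctrine L neg)

theorem erase_nonempty {r : L} {C : Finset L} (hC : C ∈ D.clauses) (hr : r ∈ C) :
    (C.erase r).Nonempty := by
  rw [← Finset.card_pos, Finset.card_erase_of_mem hr]
  have := D.two_le C hC
  omega

theorem clauseMin_eq_inf' (w : L → ℝ) {r : L} {C : Finset L} (hC : C ∈ D.clauses)
    (hr : r ∈ C) :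
    clauseMin neg w r C = (C.erase r).inf' (D.erase_nonempty hC hr) (fun q => w (neg q)) :=
  dif_pos _

theorem ne_neg (D : Doctrine L neg) (r : L) : r ≠ neg r := by
  intro h
  have h2 := D.two_le _ (D.tnd r)
  rw [← h] at h2
  simp at h2

theorem clauseMin_tnd (D : Doctrine L neg) (hneg : ∀ p, neg (neg p) = p) (w : L → ℝ) (r : L) :
    clauseMin neg w r {r, neg r} = w r := by
  have hpair : ({r, neg r} : Finset L).erase r = {neg r} :=
    Finset.erase_insert (by simpa using D.ne_neg r)
  rw [D.clauseMin_eq_inf' w (D.tnd r) (Finset.mem_insert_self _ _),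
    Finset.inf'_congr _ hpair fun _ _ => rfl, Finset.inf'_singleton, hneg]

theorem clauseMin_le_add {w w' : L → ℝ} {c : ℝ} (h : ∀ s, w s ≤ w' s + c) {r : L}
    {C : Finset L} (hC : C ∈ D.clauses) (hr : r ∈ C) :
    clauseMin neg w r C ≤ clauseMin neg w' r C + c := by
  rw [D.clauseMin_eq_inf' w hC hr, D.clauseMin_eq_inf' w' hC hr]
  obtain ⟨q, hq, hmin⟩ := Finset.exists_mem_eq_inf' (D.erase_nonempty hC hr) (fun q => w' (neg q))
  rw [hmin]
  exact (Finset.inf'_le _ hq).trans (h (neg q))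

theorem clauseMin_le_step (w : L → ℝ) {r : L} {C : Finset L} (hC : C ∈ D.clauses)
    (hr : r ∈ C) : clauseMin neg w r C ≤ step neg D w r :=
  Finset.le_sup' _ (Finset.mem_filter.mpr ⟨hC, hr⟩)

theorem step_le_add {w w' : L → ℝ} {c : ℝ} (h : ∀ s, w s ≤ w' s + c) (r : L) :
    step neg D w r ≤ step neg D w' r + c :=
  Finset.sup'_le _ _ fun C hC =>
    have hC' := Finset.mem_filter.mp hC
    (D.clauseMin_le_add h hC'.1 hC'.2).trans (by gcongr; exact D.clauseMin_le_step w' hC'.1 hC'.2)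

theorem iterate_step_le_add {w w' : L → ℝ} {c : ℝ} (h : ∀ s, w s ≤ w' s + c) (n : ℕ) (r : L) :
    (step neg D)^[n] w r ≤ (step neg D)^[n] w' r + c := by
  induction n generalizing r with
  | zero => exact h r
  | succ n ih =>
    rw [Function.iterate_succ_apply', Function.iterate_succ_apply']
    exact D.step_le_add ih r

theorem isFixedPt_le_add {w w' a a' : L → ℝ} {c : ℝ} (h : ∀ s, w s ≤ w' s + c) {m n : ℕ}
    (ha : a = (step neg D)^[m] w) (hfa : Function.IsFixedPt (step neg D) a)
    (ha' : a' = (step neg D)^[n] w') (hfa' : Function.IsFixedPt (step neg D) a') (r : L) :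
    a r ≤ a' r + c := by
  rw [← Function.iterate_eq_of_iterate_fixed ha hfa (le_max_left m n),
    ← Function.iterate_eq_of_iterate_fixed ha' hfa' (le_max_right m n)]
  exact D.iterate_step_le_add h _ r

theorem isFixedPt_mono {w w' a a' : L → ℝ} (h : w ≤ w') {m n : ℕ}
    (ha : a = (step neg D)^[m] w) (hfa : Function.IsFixedPt (step neg D) a)
    (ha' : a' = (step neg D)^[n] w') (hfa' : Function.IsFixedPt (step neg D) a') (r : L) :
    a r ≤ a' r := by
  simpa using D.isFixedPt_le_add (c := 0) (fun s => by simpa using h s) ha hfa ha' hfa' r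

theorem le_step (hneg : ∀ p, neg (neg p) = p) (w : L → ℝ) (r : L) : w r ≤ step neg D w r :=
  (D.clauseMin_tnd hneg w r).symm.le.trans
    (D.clauseMin_le_step w (D.tnd r) (Finset.mem_insert_self _ _))

theorem le_iterate_step (hneg : ∀ p, neg (neg p) = p) (w : L → ℝ) (n : ℕ) (r : L) :
    w r ≤ (step neg D)^[n] w r := by
  induction n with
  | zero => rfl
  | succ n ih =>
    rw [Function.iterate_succ_apply']
    exact ih.trans (D.le_step hneg _ r)

theorem step_mem_range (w : L → ℝ) (r : L) : step neg D w r ∈ Set.range w := by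
  obtain ⟨C, hC, hmax⟩ := Finset.exists_mem_eq_sup'
    (⟨{r, neg r}, Finset.mem_filter.mpr ⟨D.tnd r, by simp⟩⟩ :
      (D.clauses.filter (fun C => r ∈ C)).Nonempty) (clauseMin neg w r)
  obtain ⟨hC, hr⟩ := Finset.mem_filter.mp hC
  obtain ⟨q, -, hmin⟩ := Finset.exists_mem_eq_inf' (D.erase_nonempty hC hr) (fun q => w (neg q))
  exact ⟨neg q, by rw [step, hmax, D.clauseMin_eq_inf' w hC hr, hmin]⟩

theorem iterate_step_mem_range (v : L → ℝ) (n : ℕ) (r : L) :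
    (step neg D)^[n] v r ∈ Set.range v := by
  induction n generalizing r with
  | zero => exact ⟨r, rfl⟩
  | succ n ih =>
    rw [Function.iterate_succ_apply']
    obtain ⟨s, hs⟩ := D.step_mem_range _ r
    exact hs ▸ ih s

end Doctrine

theorem exists_pos_forall_lt_of_lt {ι : Type*} [Finite ι] (f : ι → ℝ) (a : ℝ) :
    ∃ ε > 0, ∀ i, a < f i → a + ε < f i := by
  have hsmall : ∀ᶠ ε in nhdsWithin (0 : ℝ) (Set.Ioi 0), ∀ i, a < f i → a + ε < f i :=
    Filter.eventually_all.2 fun i => by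
      by_cases hi : a < f i
      · filter_upwards [nhdsWithin_le_nhds (eventually_lt_nhds (sub_pos.2 hi))] with ε hε
        exact fun _ => by linarith
      · exact Filter.Eventually.of_forall fun _ h => absurd h hi
  obtain ⟨ε, hε, hpos⟩ := (hsmall.and self_mem_nhdsWithin).exists
  exact ⟨ε, hpos, hε⟩

theorem acceptability_monotone_general {L : Type} [Fintype L] [DecidableEq L]
    (neg : L → L) (hneg : ∀ p, neg (neg p) = p) (D : Doctrine L neg)
    (v : L → ℝ) (p : L)
    (vs : L → ℝ)
    (hvs : ∃ n : ℕ, vs = (step neg D)^[n] v) (hfix : step neg D vs = vs)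
    (W : ℝ → (L → ℝ))
    (hW : ∀ x, (∃ n : ℕ, W x = (step neg D)^[n] (Function.update v p x)) ∧
      step neg D (W x) = W x) :
    ∃ ε > (0:ℝ), ∀ x, v p < x → x ≤ v p + ε →
      (W x p - W x (neg p) > vs p - vs (neg p)) ∨
      (W x p - W x (neg p) = vs p - vs (neg p)) := by
  obtain ⟨ε, hε, hgap⟩ := exists_pos_forall_lt_of_lt v (v p)
  refine ⟨ε, hε, fun x hpx hxε => ?_⟩
  rw [gt_iff_lt, eq_comm, ← le_iff_lt_or_eq]
  obtain ⟨m, hm⟩ := hvs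
  obtain ⟨⟨n, hn⟩, hWfix⟩ := hW x
  have hv_le_vs : v ≤ vs := fun r => hm ▸ D.le_iterate_step hneg v m r
  have hlow : ∀ r, vs r ≤ W x r :=
    D.isFixedPt_mono (le_update_iff.2 ⟨hpx.le, fun _ _ => le_rfl⟩) hm hfix hn hWfix
  have hup : ∀ r, W x r ≤ vs r + (x - v p) :=
    D.isFixedPt_le_add (fun s => (update_le_iff.2 ⟨by linarith, fun _ _ => by linarith⟩ :
      Function.update v p x ≤ fun s => v s + (x - v p)) s) hn hWfix hm hfix
  rcases le_or_gt x (vs p) with hx | hx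
  · have hle : ∀ r, W x r ≤ vs r :=
      D.isFixedPt_mono (update_le_iff.2 ⟨hx, fun j _ => hv_le_vs j⟩) hn hWfix
        (n := 0) rfl hfix
    linarith [hle p, hlow (neg p), hlow p, hle (neg p)]
  · have hvsp : vs p = v p := by
      obtain ⟨q, hq⟩ := hm ▸ D.iterate_step_mem_range v m p
      by_contra hne
      have := hgap q (hq ▸ lt_of_le_of_ne (hv_le_vs p) (Ne.symm hne))
      linarith
    have hWp : x ≤ W x p := by
      simpa [← hn] using D.le_iterate_step hneg (Function.update v p x) n p
    linarith [hup (neg p)]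

theorem acceptability_monotone {L : Type} [Fintype L] [DecidableEq L]
    (neg : L → L) (hneg : ∀ p, neg (neg p) = p) (D : Doctrine L neg)
    (v : L → ℝ) (hv : ∀ q, 0 ≤ v q ∧ v q ≤ 1) (p : L)
    (vs : L → ℝ)
    (hvs : ∃ n : ℕ, vs = (step neg D)^[n] v) (hfix : step neg D vs = vs)
    (W : ℝ → (L → ℝ))
    (hW : ∀ x, (∃ n : ℕ, W x = (step neg D)^[n] (Function.update v p x)) ∧
      step neg D (W x) = W x) :
    ∃ ε > (0:ℝ), ∀ x, v p < x → x ≤ v p + ε →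
      (W x p - W x (neg p) > vs p - vs (neg p)) ∨
      (W x p - W x (neg p) = vs p - vs (neg p)) :=
  acceptability_monotone_general neg hneg D v p vs hvs hfix W hW
end

section
/- (Unilateral decisions for definite Horn doctrines) Suppose every non-tertium-non-datur clause of D has the form {t} ∪ {¬s : s ∈ S} with t ∈ P and S ⊆ P. Then for any α ∈ [0,1], the unilateral decision of margin α associated with v* (accept p ∈ P iff v*_p > α, reject iff v*_p < α) is definitely consistent: for every clause C ∈ D and p ∈ C, if all q ∈ C \ {p} are rejected then p is accepted. -/
open Finset

/-- In the unilateral decision of margin `α` associated with `vs`, the literal `q` is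
accepted: for an atom `q ∈ Pos` this means `vs q > α`; for a negative literal `q = ¬s`
(`q ∉ Pos`), `¬s` is accepted iff `s` is rejected, i.e. `vs (neg q) < α`. -/
def uniAccepted {L : Type} (neg : L → L) [DecidableEq L] (Pos : Finset L)
    (vs : L → ℝ) (α : ℝ) (q : L) : Prop :=
  if q ∈ Pos then vs q > α else vs (neg q) < α

/-- `q` is rejected by the unilateral decision of margin `α`. -/
def uniRejected {L : Type} (neg : L → L) [DecidableEq L] (Pos : Finset L)
    (vs : L → ℝ) (α : ℝ) (q : L) : Prop :=
  if q ∈ Pos then vs q < α else vs (neg q) > α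

/-!
At the fixed point `v*` every clause `C ∋ x` of the doctrine bounds `v*_x` from below by
`min_{q ∈ C, q ≠ x} v*_{¬q}`. A tertium-non-datur clause `{p, ¬p}` is consistent by the very
definition of the unilateral decision. In a definite Horn clause with head `t`, rejecting all body
literals `¬s` means `v*_s > α` for each of them, which forces `v*_t > α`; and if instead `t` and all
body literals but `¬s₀` are rejected, then `v*_t < α` forces some body atom below `α`, and that can
only be `s₀`.
-/

section

variable {L : Type} [DecidableEq L] {neg : L → L}

theorem Doctrine.erase_nonempty_s17 (D : Doctrine L neg) {C : Finset L} (hC : C ∈ D.clauses)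
    (p : L) : (C.erase p).Nonempty := by
  rw [← Finset.card_pos]
  have := D.two_le C hC
  have := Finset.pred_card_le_card_erase (s := C) (a := p)
  omega

theorem Doctrine.clauseMin_eq_inf'_s17 (D : Doctrine L neg) {C : Finset L} (hC : C ∈ D.clauses)
    (v : L → ℝ) (p : L) :
    clauseMin neg v p C = (C.erase p).inf' (D.erase_nonempty_s17 hC p) (fun q => v (neg q)) :=
  dif_pos _

theorem clauseMin_le_of_step_eq_self {D : Doctrine L neg} {v : L → ℝ} (hfix : step neg D v = v)
    {C : Finset L} (hC : C ∈ D.clauses) {p : L} (hp : p ∈ C) : clauseMin neg v p C ≤ v p :=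
  calc clauseMin neg v p C ≤ step neg D v p :=
        Finset.le_sup' (clauseMin neg v p) (Finset.mem_filter.mpr ⟨hC, hp⟩)
    _ = v p := by rw [hfix]

variable {Pos : Finset L} {vs : L → ℝ} {α : ℝ} {q : L}

theorem uniAccepted_iff_of_mem (h : q ∈ Pos) : uniAccepted neg Pos vs α q ↔ α < vs q := by
  simp only [uniAccepted, if_pos h, gt_iff_lt]

theorem uniAccepted_iff_of_notMem (h : q ∉ Pos) :
    uniAccepted neg Pos vs α q ↔ vs (neg q) < α := by
  simp only [uniAccepted, if_neg h]

theorem uniRejected_iff_of_mem (h : q ∈ Pos) : uniRejected neg Pos vs α q ↔ vs q < α := by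
  simp only [uniRejected, if_pos h]

theorem uniRejected_iff_of_notMem (h : q ∉ Pos) :
    uniRejected neg Pos vs α q ↔ α < vs (neg q) := by
  simp only [uniRejected, if_neg h, gt_iff_lt]

theorem uniRejected_neg_iff_uniAccepted (hneg : ∀ p, neg (neg p) = p)
    (hPos : ∀ p, p ∈ Pos ↔ neg p ∉ Pos) (p : L) :
    uniRejected neg Pos vs α (neg p) ↔ uniAccepted neg Pos vs α p := by
  by_cases hp : p ∈ Pos
  · rw [uniRejected_iff_of_notMem ((hPos p).mp hp), hneg, uniAccepted_iff_of_mem hp]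
  · rw [uniRejected_iff_of_mem (not_not.mp (mt (hPos p).mpr hp)), uniAccepted_iff_of_notMem hp]

theorem neg_ne_of_mem_iff_neg_notMem (hPos : ∀ p, p ∈ Pos ↔ neg p ∉ Pos) (p : L) : neg p ≠ p := by
  intro h
  have := hPos p
  rw [h] at this
  tauto

theorem notMem_of_mem_insert_image_neg (hPos : ∀ p, p ∈ Pos ↔ neg p ∉ Pos) {t : L}
    {S : Finset L} (hS : S ⊆ Pos) : ∀ q ∈ insert t (S.image neg), q ≠ t → q ∉ Pos := by
  intro q hq hqt
  obtain ⟨s, hs, rfl⟩ := Finset.mem_image.mp ((Finset.mem_insert.mp hq).resolve_left hqt)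
  exact (hPos s).mp (hS hs)

theorem uniAccepted_of_tnd (hneg : ∀ p, neg (neg p) = p) (hPos : ∀ p, p ∈ Pos ↔ neg p ∉ Pos)
    {r p : L} (hp : p ∈ ({r, neg r} : Finset L))
    (hrej : ∀ q ∈ ({r, neg r} : Finset L), q ≠ p → uniRejected neg Pos vs α q) :
    uniAccepted neg Pos vs α p := by
  have hnp : neg p ∈ ({r, neg r} : Finset L) := by
    rcases Finset.mem_insert.mp hp with rfl | hp
    · simp
    · simp [Finset.mem_singleton.mp hp, hneg]
  exact (uniRejected_neg_iff_uniAccepted hneg hPos p).mp (hrej _ hnp (neg_ne_of_mem_iff_neg_notMem hPos p))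

section DefiniteClause

variable {D : Doctrine L neg} {C : Finset L} {t : L}

theorem uniAccepted_head (hfix : step neg D vs = vs) (hC : C ∈ D.clauses) (ht : t ∈ C)
    (htPos : t ∈ Pos) (hbody : ∀ q ∈ C, q ≠ t → q ∉ Pos)
    (hrej : ∀ q ∈ C, q ≠ t → uniRejected neg Pos vs α q) : uniAccepted neg Pos vs α t := by
  rw [uniAccepted_iff_of_mem htPos]
  calc α < clauseMin neg vs t C := by
        rw [D.clauseMin_eq_inf'_s17 hC, Finset.lt_inf'_iff]
        intro q hq
        obtain ⟨hqt, hqC⟩ := Finset.mem_erase.mp hq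
        exact (uniRejected_iff_of_notMem (hbody q hqC hqt)).mp (hrej q hqC hqt)
    _ ≤ vs t := clauseMin_le_of_step_eq_self hfix hC ht

theorem uniAccepted_body (hfix : step neg D vs = vs) (hC : C ∈ D.clauses) (ht : t ∈ C)
    (htPos : t ∈ Pos) (hbody : ∀ q ∈ C, q ≠ t → q ∉ Pos) {p : L} (hp : p ∈ C) (hpt : p ≠ t)
    (hrej : ∀ q ∈ C, q ≠ p → uniRejected neg Pos vs α q) : uniAccepted neg Pos vs α p := by
  have hvt : vs t < α := (uniRejected_iff_of_mem htPos).mp (hrej t ht hpt.symm)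
  obtain ⟨q, hq, hqα⟩ : ∃ q ∈ C.erase t, vs (neg q) < α := by
    rw [← Finset.inf'_lt_iff (D.erase_nonempty_s17 hC t), ← D.clauseMin_eq_inf'_s17 hC]
    exact (clauseMin_le_of_step_eq_self hfix hC ht).trans_lt hvt
  obtain ⟨hqt, hqC⟩ := Finset.mem_erase.mp hq
  rw [uniAccepted_iff_of_notMem (hbody p hp hpt)]
  by_cases hqp : q = p
  · exact hqp ▸ hqα
  · exact absurd hqα
      ((uniRejected_iff_of_notMem (hbody q hqC hqt)).mp (hrej q hqC hqp)).not_gt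

end DefiniteClause

end

theorem definiteHorn_unilateral_definitelyConsistent_general {L : Type} [DecidableEq L]
    (neg : L → L) (hneg : ∀ p, neg (neg p) = p) (D : Doctrine L neg)
    (Pos : Finset L) (hPos : ∀ p, p ∈ Pos ↔ neg p ∉ Pos)
    (hHorn : ∀ C ∈ D.clauses, (¬ ∃ p : L, C = {p, neg p}) →
      ∃ t ∈ Pos, ∃ S ⊆ Pos, C = insert t (S.image neg))
    (vs : L → ℝ)
    (hfix : step neg D vs = vs)
    (α : ℝ) :
    ∀ C ∈ D.clauses, ∀ p ∈ C,
      (∀ q ∈ C, q ≠ p → uniRejected neg Pos vs α q) → uniAccepted neg Pos vs α p := by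
  intro C hC p hp hrej
  by_cases htnd : ∃ r : L, C = {r, neg r}
  · obtain ⟨r, rfl⟩ := htnd
    exact uniAccepted_of_tnd hneg hPos hp hrej
  obtain ⟨t, htPos, S, hS, rfl⟩ := hHorn C hC htnd
  have hbody := notMem_of_mem_insert_image_neg hPos hS (t := t)
  have ht := Finset.mem_insert_self t (S.image neg)
  by_cases hpt : p = t
  · subst hpt
    exact uniAccepted_head hfix hC ht htPos hbody hrej
  · exact uniAccepted_body hfix hC ht htPos hbody hp hpt hrej

theorem definiteHorn_unilateral_definitelyConsistent {L : Type} [Fintype L] [DecidableEq L]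
    (neg : L → L) (hneg : ∀ p, neg (neg p) = p) (D : Doctrine L neg)
    (Pos : Finset L) (hPos : ∀ p, p ∈ Pos ↔ neg p ∉ Pos)
    (hHorn : ∀ C ∈ D.clauses, (¬ ∃ p : L, C = {p, neg p}) →
      ∃ t ∈ Pos, ∃ S ⊆ Pos, C = insert t (S.image neg))
    (v vs : L → ℝ) (hv : ∀ p, 0 ≤ v p ∧ v p ≤ 1)
    (hvs : ∃ n : ℕ, vs = (step neg D)^[n] v) (hfix : step neg D vs = vs)
    (α : ℝ) (hα : 0 ≤ α ∧ α ≤ 1) :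
    ∀ C ∈ D.clauses, ∀ p ∈ C,
      (∀ q ∈ C, q ≠ p → uniRejected neg Pos vs α q) → uniAccepted neg Pos vs α p :=
  definiteHorn_unilateral_definitelyConsistent_general neg hneg D Pos hPos hHorn vs hfix α
end

section
/- (Autarkic sets bound) Let Σ ⊆ Π be an autarkic set: Σ does not contain any literal together with its negation, and every clause C ∈ D containing ¬p for some p ∈ Σ also contains some q ∈ Σ. Then for every valuation v, max_{p ∈ Σ} v*_{¬p} ≤ max_{q ∈ Σ} v_{¬q}. -/
open Finset

/-! On an autarkic set `Sig` the values `v (neg p)` are controlled by `Sig` alone: every clause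
through some `neg p` with `p ∈ Sig` also passes through a literal `q ∈ Sig` other than `neg p`,
so its contribution to `step` at `neg p` is at most `v (neg q)`. Hence one step, and therefore
every iterate, keeps the maximum of `v ∘ neg` over `Sig` from growing. -/

section SupOverFinset

variable {ι : Type*} {s : Finset ι} {f g : ι → ℝ}

theorem setOf_exists_mem_eq_image (s : Finset ι) (f : ι → ℝ) :
    {x : ℝ | ∃ i ∈ s, x = f i} = f '' s := by
  ext x
  simp [eq_comm]

theorem le_sSup_setOf_exists_mem {i : ι} (hi : i ∈ s) : f i ≤ sSup {x : ℝ | ∃ j ∈ s, x = f j} := by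
  rw [setOf_exists_mem_eq_image]
  exact le_csSup (s.finite_toSet.image f).bddAbove ⟨i, hi, rfl⟩

theorem sSup_setOf_exists_mem_le (h : ∀ i ∈ s, f i ≤ sSup {x : ℝ | ∃ j ∈ s, x = g j}) :
    sSup {x : ℝ | ∃ i ∈ s, x = f i} ≤ sSup {x : ℝ | ∃ j ∈ s, x = g j} := by
  rcases s.eq_empty_or_nonempty with rfl | hs
  · simp
  · rw [setOf_exists_mem_eq_image]
    exact csSup_le ((coe_nonempty.2 hs).image f) (by rintro _ ⟨i, hi, rfl⟩; exact h i hi)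

end SupOverFinset

section Autarky

variable {L : Type} [DecidableEq L] {neg : L → L} {D : Doctrine L neg} {Sig : Finset L}

theorem clauseMin_le_of_mem (v : L → ℝ) {p q : L} {C : Finset L} (hq : q ∈ C) (hqp : q ≠ p) :
    clauseMin neg v p C ≤ v (neg q) := by
  have hq' : q ∈ C.erase p := mem_erase.2 ⟨hqp, hq⟩
  rw [clauseMin, dif_pos ⟨q, hq'⟩]
  exact inf'_le _ hq'

theorem step_neg_le_of_autarkic (hA1 : ∀ p ∈ Sig, neg p ∉ Sig)
    (hA2 : ∀ C ∈ D.clauses, (∃ p ∈ Sig, neg p ∈ C) → ∃ q ∈ Sig, q ∈ C)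
    {w : L → ℝ} {M : ℝ} (hw : ∀ p ∈ Sig, w (neg p) ≤ M) :
    ∀ p ∈ Sig, step neg D w (neg p) ≤ M := by
  intro p hp
  refine sup'_le _ _ fun C hC => ?_
  obtain ⟨hCD, hpC⟩ := mem_filter.1 hC
  obtain ⟨q, hqSig, hqC⟩ := hA2 C hCD ⟨p, hp, hpC⟩
  have hqp : q ≠ neg p := fun h => hA1 p hp (h ▸ hqSig)
  exact (clauseMin_le_of_mem w hqC hqp).trans (hw q hqSig)

theorem iterate_step_neg_le_of_autarkic (hA1 : ∀ p ∈ Sig, neg p ∉ Sig)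
    (hA2 : ∀ C ∈ D.clauses, (∃ p ∈ Sig, neg p ∈ C) → ∃ q ∈ Sig, q ∈ C)
    (n : ℕ) {w : L → ℝ} {M : ℝ} (hw : ∀ p ∈ Sig, w (neg p) ≤ M) :
    ∀ p ∈ Sig, (step neg D)^[n] w (neg p) ≤ M :=
  Set.MapsTo.iterate (f := step neg D) (s := {w : L → ℝ | ∀ p ∈ Sig, w (neg p) ≤ M})
    (fun _ => step_neg_le_of_autarkic hA1 hA2) n hw

end Autarky

theorem autarkic_bound_general {L : Type} [DecidableEq L]
    (neg : L → L) (D : Doctrine L neg)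
    (Sig : Finset L) (hA1 : ∀ p ∈ Sig, neg p ∉ Sig)
    (hA2 : ∀ C ∈ D.clauses, (∃ p ∈ Sig, neg p ∈ C) → ∃ q ∈ Sig, q ∈ C)
    (v vs : L → ℝ)
    (hvs : ∃ n : ℕ, vs = (step neg D)^[n] v) :
    sSup {x : ℝ | ∃ p ∈ Sig, x = vs (neg p)} ≤
      sSup {x : ℝ | ∃ q ∈ Sig, x = v (neg q)} := by
  obtain ⟨n, rfl⟩ := hvs
  refine sSup_setOf_exists_mem_le (f := fun p => (step neg D)^[n] v (neg p)) ?_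
  exact iterate_step_neg_le_of_autarkic hA1 hA2 n fun p hp =>
    le_sSup_setOf_exists_mem (f := fun q => v (neg q)) hp

theorem autarkic_bound {L : Type} [Fintype L] [DecidableEq L]
    (neg : L → L) (hneg : ∀ p, neg (neg p) = p) (D : Doctrine L neg)
    (Sig : Finset L) (hA1 : ∀ p ∈ Sig, neg p ∉ Sig)
    (hA2 : ∀ C ∈ D.clauses, (∃ p ∈ Sig, neg p ∈ C) → ∃ q ∈ Sig, q ∈ C)
    (v vs : L → ℝ) (hv : ∀ p, 0 ≤ v p ∧ v p ≤ 1)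
    (hvs : ∃ n : ℕ, vs = (step neg D)^[n] v) (hfix : step neg D vs = vs) :
    sSup {x : ℝ | ∃ p ∈ Sig, x = vs (neg p)} ≤
      sSup {x : ℝ | ∃ q ∈ Sig, x = v (neg q)} :=
  autarkic_bound_general neg D Sig hA1 hA2 v vs hvs
end
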